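/- Let F be a finite metric space with at least two points and no focal points, and let μ : F → [0,∞) be a function, extended to subsets A ⊆ F by μ(A) := Σ_{x∈A} μ(x). Suppose there exist c > 0 and s > 0 such that μ(U) ≤ c·Δ(U)^s for every subset U ⊆ F with at least two elements and Δ(U) ≤ ∇(F). Then μ(F) ≤ c·H^s(F). If moreover c·Δ(F)^s ≤ μ(F), then s ≤ dim_fH(F). -/

import Mathlib

/-! An optimal 2-covering realising `H^s(F)` has members of diameter at most `∇(F)`, so summing
the mass bound over its members gives `μ(F) ≤ c H^s(F)`.

For the dimension bound, `H^t(F) / Δ(F)^t` is the minimum, over the finitely many optimal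
2-coverings `𝒰`, of `∑_{U ∈ 𝒰} (Δ(U)/Δ(F))^t`. Without focal points `∇(F) < Δ(F)`, so all ratios
lie in `(0, 1)`: the minimum is continuous, strictly decreasing and tends to `0`. The hypothesis
`c Δ(F)^s ≤ μ(F)` and the first part make it `≥ 1` at `s`, so the points where it equals `1`, which exist by the
intermediate value theorem, all lie above `s`. -/

open Metric

namespace FinDim

variable {X : Type*} [MetricSpace X]

/-- `ν_F(a)`: the distance from `a` to a nearest other point of `F`. -/
noncomputable def nu (F : Finset X) (a : X) : ℝ :=
  sInf {r : ℝ | ∃ x ∈ F, x ≠ a ∧ r = dist a x}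

/-- `δ(F)`: the separation of `F`, the minimum distance between distinct points. -/
noncomputable def sep (F : Finset X) : ℝ :=
  sInf {r : ℝ | ∃ x ∈ F, ∃ y ∈ F, x ≠ y ∧ r = dist x y}

/-- A 2-covering of `F`: a family of subsets of `F` covering `F`,
each member having at least two elements. -/
def IsTwoCover (F : Finset X) (U : Finset (Finset X)) : Prop :=
  (∀ V ∈ U, V ⊆ F) ∧ (∀ V ∈ U, 2 ≤ V.card) ∧ ∀ a ∈ F, ∃ V ∈ U, a ∈ V

/-- `Δ(𝒰)`: maximum diameter of the members of the family `𝒰`. -/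
noncomputable def coverDiam (U : Finset (Finset X)) : ℝ :=
  sSup {r : ℝ | ∃ V ∈ U, r = Metric.diam (V : Set X)}

/-- `∇(F)`: the covering diameter of `F`. -/
noncomputable def nablaF (F : Finset X) : ℝ :=
  sInf {r : ℝ | ∃ U : Finset (Finset X), IsTwoCover F U ∧ r = coverDiam U}

/-- `a` is a focal point of `F`. -/
def IsFocal (F : Finset X) (a : X) : Prop :=
  a ∈ F ∧ ∀ x ∈ F, x ≠ a → dist a x = Metric.diam (F : Set X)

/-- `H^s_𝒰(F) = Σ_{U ∈ 𝒰} Δ(U)^s`. -/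
noncomputable def Hcov (U : Finset (Finset X)) (s : ℝ) : ℝ :=
  ∑ V ∈ U, Metric.diam (V : Set X) ^ s

/-- `H^s(F)`: minimum of `H^s_𝒰(F)` over 2-coverings `𝒰` with `Δ(𝒰) = ∇(F)`. -/
noncomputable def HH (F : Finset X) (s : ℝ) : ℝ :=
  sInf {h : ℝ | ∃ U : Finset (Finset X),
    IsTwoCover F U ∧ coverDiam U = nablaF F ∧ h = Hcov U s}

/-- The finite Hausdorff dimension: the unique `s₀ ∈ (0,∞)` with
`H^{s₀}(F) = Δ(F)^{s₀}` (when `F` has no focal points). -/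
noncomputable def dimfH (F : Finset X) : ℝ :=
  sInf {s : ℝ | 0 < s ∧ HH F s = Metric.diam (F : Set X) ^ s}

/-- `T_{∇(F)}(F)`: the minimal cardinality of a 2-covering `𝒰` with `Δ(𝒰) = ∇(F)`. -/
noncomputable def Tmin (F : Finset X) : ℕ :=
  sInf {n : ℕ | ∃ U : Finset (Finset X),
    IsTwoCover F U ∧ coverDiam U = nablaF F ∧ U.card = n}

/-- The finite box dimension `dim_fB(F) = ln T_{∇(F)}(F) / ln (Δ(F)/∇(F))`. -/
noncomputable def dimfB (F : Finset X) : ℝ :=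
  Real.log (Tmin F) / Real.log (Metric.diam (F : Set X) / nablaF F)

/-- `ν_A(x)` for a subset `A` of a metric space. -/
noncomputable def nuSet {Z : Type*} [MetricSpace Z] (A : Set Z) (x : Z) : ℝ :=
  sInf {r : ℝ | ∃ y ∈ A, y ≠ x ∧ r = dist x y}

/-- `∇(A) = sup {ν_A(x) : x ∈ A}` for a subset `A` of a metric space. -/
noncomputable def nablaSet {Z : Type*} [MetricSpace Z] (A : Set Z) : ℝ :=
  sSup {r : ℝ | ∃ x ∈ A, r = nuSet A x}

end FinDim

section RpowSums

open Filter Topology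

lemma strictAnti_finset_inf'_apply {ι α β : Type*} [Preorder α] [LinearOrder β]
    {s : Finset ι} (hs : s.Nonempty) {f : ι → α → β} (hf : ∀ i ∈ s, StrictAnti (f i)) :
    StrictAnti fun a => s.inf' hs (f · a) := by
  intro a b hab
  obtain ⟨i, hi, hia⟩ := Finset.exists_mem_eq_inf' hs (f · a)
  simp only [hia]
  exact (Finset.inf'_le _ hi).trans_lt (hf i hi hab)

variable {κ : Type*} {S : Finset (Finset κ)} (hS : S.Nonempty) {r : κ → ℝ}

lemma continuous_inf'_sum_rpow (h0 : ∀ U ∈ S, ∀ j ∈ U, 0 < r j) :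
    Continuous fun t : ℝ => S.inf' hS fun U => ∑ j ∈ U, r j ^ t :=
  Continuous.finset_inf'_apply hS fun U hU =>
    continuous_finsetSum _ fun j hj =>
      continuous_const.rpow continuous_id fun _ => Or.inl (h0 U hU j hj).ne'

lemma strictAnti_inf'_sum_rpow (hne : ∀ U ∈ S, U.Nonempty)
    (h0 : ∀ U ∈ S, ∀ j ∈ U, 0 < r j) (h1 : ∀ U ∈ S, ∀ j ∈ U, r j < 1) :
    StrictAnti fun t : ℝ => S.inf' hS fun U => ∑ j ∈ U, r j ^ t :=
  strictAnti_finset_inf'_apply hS fun U hU _ _ hab =>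
    Finset.sum_lt_sum_of_nonempty (hne U hU) fun j hj =>
      Real.rpow_lt_rpow_of_exponent_gt (h0 U hU j hj) (h1 U hU j hj) hab

lemma tendsto_inf'_sum_rpow_atTop (h0 : ∀ U ∈ S, ∀ j ∈ U, 0 < r j)
    (h1 : ∀ U ∈ S, ∀ j ∈ U, r j < 1) :
    Tendsto (fun t : ℝ => S.inf' hS fun U => ∑ j ∈ U, r j ^ t) atTop (𝓝 0) := by
  have hsum : ∀ U ∈ S, Tendsto (fun t : ℝ => ∑ j ∈ U, r j ^ t) atTop (𝓝 0) := by
    intro U hU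
    simpa using tendsto_finsetSum U fun j hj =>
      tendsto_rpow_atTop_of_base_lt_one _ (by linarith [h0 U hU j hj]) (h1 U hU j hj)
  simpa using Tendsto.finset_inf'_nhds_apply hS hsum

/-- The intermediate value theorem gives a solution `t ≥ s` of `φ t = 1`, so the set is nonempty
(its `sInf` is not the junk value `0`). -/
lemma le_csInf_setOf_eq_one {φ : ℝ → ℝ} (hcont : Continuous φ) (hanti : StrictAnti φ)
    (hlim : Tendsto φ atTop (𝓝 0)) {s : ℝ} (hs : 0 < s) (h1 : 1 ≤ φ s) :
    s ≤ sInf {t | 0 < t ∧ φ t = 1} := by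
  obtain ⟨T, hT1, hsT⟩ :=
    ((hlim.eventually_lt_const one_pos).and (eventually_ge_atTop s)).exists
  obtain ⟨t₀, ht₀, hφt₀⟩ := intermediate_value_Icc' hsT hcont.continuousOn ⟨hT1.le, h1⟩
  refine le_csInf ⟨t₀, hs.trans_le ht₀.1, hφt₀⟩ fun t ⟨_, ht⟩ => ?_
  exact hanti.le_iff_ge.mp (ht ▸ h1)

end RpowSums

namespace FinDim

section TwoCovers

variable {X : Type*} {F : Finset X} {U : Finset (Finset X)}

lemma isTwoCover_singleton (hF : 2 ≤ F.card) : IsTwoCover F {F} := by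
  refine ⟨?_, ?_, fun a ha => ⟨F, Finset.mem_singleton_self F, ha⟩⟩ <;>
    simp only [Finset.mem_singleton, forall_eq]
  exacts [subset_rfl, hF]

lemma sum_le_sum_sum_of_isTwoCover (hU : IsTwoCover F U) {μ : X → ℝ}
    (hμ : ∀ x ∈ F, 0 ≤ μ x) : ∑ x ∈ F, μ x ≤ ∑ V ∈ U, ∑ x ∈ V, μ x := by
  classical
  obtain ⟨hsub, -, hcov⟩ := hU
  have hV : ∀ V ∈ U, ∑ x ∈ V, μ x = ∑ x ∈ F, if x ∈ V then μ x else 0 := fun V hV => by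
    rw [Finset.sum_ite_mem, Finset.inter_eq_right.mpr (hsub V hV)]
  rw [Finset.sum_congr rfl hV, Finset.sum_comm]
  refine Finset.sum_le_sum fun x hx => ?_
  obtain ⟨V, hVU, hxV⟩ := hcov x hx
  calc μ x = if x ∈ V then μ x else 0 := by rw [if_pos hxV]
    _ ≤ ∑ W ∈ U, if x ∈ W then μ x else 0 :=
      Finset.single_le_sum (f := fun W => if x ∈ W then μ x else 0)
        (fun W _ => by split <;> simp [hμ x hx]) hVU

open Classical in
noncomputable def twoCovers (F : Finset X) : Finset (Finset (Finset X)) :=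
  {U ∈ F.powerset.powerset | IsTwoCover F U}

lemma mem_twoCovers : U ∈ twoCovers F ↔ IsTwoCover F U := by
  simp only [twoCovers, Finset.mem_filter, Finset.mem_powerset, and_iff_right_iff_imp]
  exact fun h V hV => Finset.mem_powerset.mpr (h.1 V hV)

lemma IsTwoCover.nonempty (hU : IsTwoCover F U) (hF : F.Nonempty) : U.Nonempty :=
  let ⟨a, ha⟩ := hF
  let ⟨V, hV, _⟩ := hU.2.2 a ha
  ⟨V, hV⟩

end TwoCovers

variable {X : Type*} [MetricSpace X] {F : Finset X} {U : Finset (Finset X)}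

lemma diam_pos_of_two_le_card {V : Finset X} (hV : 2 ≤ V.card) : 0 < diam (V : Set X) :=
  diam_pos (Finset.one_lt_card_iff_nontrivial.mp hV) V.finite_toSet.isBounded

lemma coverDiam_eq_sup' (hU : U.Nonempty) :
    coverDiam U = U.sup' hU fun V => diam (V : Set X) := by
  rw [coverDiam, Finset.sup'_eq_csSup_image]
  congr 1
  ext r
  simp [eq_comm]

lemma diam_le_coverDiam {V : Finset X} (hV : V ∈ U) : diam (V : Set X) ≤ coverDiam U := by
  rw [coverDiam_eq_sup' ⟨V, hV⟩]
  exact Finset.le_sup' (fun V : Finset X => diam (V : Set X)) hV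

lemma nablaF_eq_inf' (h : (twoCovers F).Nonempty) :
    nablaF F = (twoCovers F).inf' h coverDiam := by
  rw [nablaF, Finset.inf'_eq_csInf_image]
  congr 1
  ext r
  simp [mem_twoCovers, eq_comm]

lemma nablaF_le_coverDiam (hU : IsTwoCover F U) : nablaF F ≤ coverDiam U := by
  rw [nablaF_eq_inf' ⟨U, mem_twoCovers.mpr hU⟩]
  exact Finset.inf'_le _ (mem_twoCovers.mpr hU)

open Classical in
noncomputable def optimalCovers (F : Finset X) : Finset (Finset (Finset X)) :=
  {U ∈ twoCovers F | coverDiam U = nablaF F}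

lemma mem_optimalCovers : U ∈ optimalCovers F ↔ IsTwoCover F U ∧ coverDiam U = nablaF F := by
  simp only [optimalCovers, Finset.mem_filter, mem_twoCovers]

lemma optimalCovers_nonempty (hF : 2 ≤ F.card) : (optimalCovers F).Nonempty := by
  have h : (twoCovers F).Nonempty := ⟨{F}, mem_twoCovers.mpr (isTwoCover_singleton hF)⟩
  obtain ⟨U, hU, hUeq⟩ := Finset.exists_mem_eq_inf' h coverDiam
  exact ⟨U, mem_optimalCovers.mpr ⟨mem_twoCovers.mp hU, by rw [nablaF_eq_inf' h, hUeq]⟩⟩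

lemma HH_eq_inf' (h : (optimalCovers F).Nonempty) (s : ℝ) :
    HH F s = (optimalCovers F).inf' h fun U => Hcov U s := by
  rw [HH, Finset.inf'_eq_csInf_image]
  congr 1
  ext r
  simp [mem_optimalCovers, eq_comm, and_assoc]

lemma nablaF_lt_diam (hF : F.Nonempty) (hfoc : ∀ a, ¬ IsFocal F a) :
    nablaF F < diam (F : Set X) := by
  classical
  set U : Finset (Finset X) := {V ∈ F.powersetCard 2 | diam (V : Set X) < diam (F : Set X)}
  have hpair : ∀ a ∈ F, ∃ x, ({a, x} : Finset X) ∈ U := by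
    intro a ha
    obtain ⟨x, hx, hxa, hne⟩ : ∃ x ∈ F, x ≠ a ∧ dist a x ≠ diam (F : Set X) := by
      simpa [IsFocal, ha] using hfoc a
    refine ⟨x, Finset.mem_filter.mpr ⟨Finset.mem_powersetCard.mpr
      ⟨Finset.insert_subset ha (Finset.singleton_subset_iff.mpr hx), Finset.card_pair hxa.symm⟩, ?_⟩⟩
    rw [Finset.coe_pair, diam_pair]
    exact (dist_le_diam_of_mem F.finite_toSet.isBounded ha hx).lt_of_ne hne
  have hmem : ∀ V ∈ U, V ⊆ F ∧ V.card = 2 := fun V hV =>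
    Finset.mem_powersetCard.mp (Finset.mem_filter.mp hV).1
  have hU : IsTwoCover F U := ⟨fun V hV => (hmem V hV).1, fun V hV => (hmem V hV).2.ge,
    fun a ha => ⟨_, (hpair a ha).choose_spec, Finset.mem_insert_self a _⟩⟩
  refine (nablaF_le_coverDiam hU).trans_lt ?_
  rw [coverDiam_eq_sup' (hU.nonempty hF), Finset.sup'_lt_iff]
  exact fun V hV => (Finset.mem_filter.mp hV).2

lemma sum_le_mul_HH (hF : 2 ≤ F.card) {μ : X → ℝ} (hμ : ∀ x ∈ F, 0 ≤ μ x) {c s : ℝ}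
    (hmass : ∀ V : Finset X, V ⊆ F → 2 ≤ V.card → diam (V : Set X) ≤ nablaF F →
      ∑ x ∈ V, μ x ≤ c * diam (V : Set X) ^ s) :
    ∑ x ∈ F, μ x ≤ c * HH F s := by
  obtain ⟨U, hU, hUeq⟩ :=
    Finset.exists_mem_eq_inf' (optimalCovers_nonempty hF) fun U => Hcov U s
  obtain ⟨hcov, hdiam⟩ := mem_optimalCovers.mp hU
  rw [HH_eq_inf' (optimalCovers_nonempty hF), hUeq, Hcov, Finset.mul_sum]
  refine (sum_le_sum_sum_of_isTwoCover hcov hμ).trans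
    (Finset.sum_le_sum fun V hV => hmass V (hcov.1 V hV) (hcov.2.1 V hV) ?_)
  exact hdiam ▸ diam_le_coverDiam hV

lemma HH_div_rpow_eq_inf' (h : (optimalCovers F).Nonempty) (t : ℝ) :
    HH F t / diam (F : Set X) ^ t = (optimalCovers F).inf' h
      fun U => ∑ V ∈ U, (diam (V : Set X) / diam (F : Set X)) ^ t := by
  have hD : 0 ≤ diam (F : Set X) ^ t := Real.rpow_nonneg diam_nonneg t
  rw [HH_eq_inf' h, Finset.apply_inf'_eq_inf'_comp h (· / diam (F : Set X) ^ t)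
    fun a b => (min_div_div_right hD a b).symm]
  refine Finset.inf'_congr h rfl fun U _ => ?_
  simp only [Function.comp, Hcov, Finset.sum_div, Real.div_rpow diam_nonneg diam_nonneg]

lemma le_dimfH_of_diam_rpow_le_HH (hF : 2 ≤ F.card) (hfoc : ∀ a, ¬ IsFocal F a) {s : ℝ}
    (hs : 0 < s) (h : diam (F : Set X) ^ s ≤ HH F s) : s ≤ dimfH F := by
  have hD : 0 < diam (F : Set X) := diam_pos_of_two_le_card hF
  have hFne : F.Nonempty := Finset.card_pos.mp (by omega)
  have hopt := optimalCovers_nonempty hF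
  have hne : ∀ U ∈ optimalCovers F, U.Nonempty := fun U hU =>
    (mem_optimalCovers.mp hU).1.nonempty hFne
  have hr0 : ∀ U ∈ optimalCovers F, ∀ V ∈ U, 0 < diam (V : Set X) / diam (F : Set X) :=
    fun U hU V hV => div_pos (diam_pos_of_two_le_card ((mem_optimalCovers.mp hU).1.2.1 V hV)) hD
  have hr1 : ∀ U ∈ optimalCovers F, ∀ V ∈ U, diam (V : Set X) / diam (F : Set X) < 1 :=
    fun U hU V hV => (div_lt_one hD).mpr
      (((mem_optimalCovers.mp hU).2 ▸ diam_le_coverDiam hV).trans_lt (nablaF_lt_diam hFne hfoc))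
  have hset : {t | 0 < t ∧ HH F t = diam (F : Set X) ^ t} = {t | 0 < t ∧
      ((optimalCovers F).inf' hopt fun U => ∑ V ∈ U, (diam (V : Set X) / diam (F : Set X)) ^ t)
        = 1} :=
    Set.ext fun t => and_congr_right fun _ => by
      rw [← HH_div_rpow_eq_inf', div_eq_one_iff_eq (Real.rpow_pos_of_pos hD t).ne']
  rw [dimfH, hset]
  refine le_csInf_setOf_eq_one (continuous_inf'_sum_rpow hopt hr0)
    (strictAnti_inf'_sum_rpow hopt hne hr0 hr1) (tendsto_inf'_sum_rpow_atTop hopt hr0 hr1) hs ?_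
  rwa [← HH_div_rpow_eq_inf', one_le_div (Real.rpow_pos_of_pos hD s)]

end FinDim

open FinDim in
/-- Mass distribution principle for the finite Hausdorff dimension. -/
theorem stmt10 {X : Type*} [MetricSpace X] (F : Finset X) (hF : 2 ≤ F.card)
    (hfoc : ∀ a, ¬ IsFocal F a)
    (μ : X → ℝ) (hμ : ∀ x ∈ F, 0 ≤ μ x)
    (c s : ℝ) (hc : 0 < c) (hs : 0 < s)
    (hmass : ∀ U : Finset X, U ⊆ F → 2 ≤ U.card → Metric.diam (U : Set X) ≤ nablaF F →
      (∑ x ∈ U, μ x) ≤ c * Metric.diam (U : Set X) ^ s) :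
    (∑ x ∈ F, μ x) ≤ c * HH F s ∧
    (c * Metric.diam (F : Set X) ^ s ≤ ∑ x ∈ F, μ x → s ≤ dimfH F) := by
  have hmain := sum_le_mul_HH hF hμ hmass
  exact ⟨hmain, fun hlow => le_dimfH_of_diam_rpow_le_HH hF hfoc hs
    (le_of_mul_le_mul_left (hlow.trans hmain) hc)⟩
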